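/- Let q be a prime power and let b be a positive integer. The vanishing ideal I of the F_q-rational points of the weighted projective plane P(1,1,b), i.e., the ideal of S = F_q[x₁,x₂,x₃] generated by all weighted-homogeneous polynomials (with respect to the grading deg x₁ = 1, deg x₂ = 1, deg x₃ = b) that vanish at every point of F_q³ ∖ {(0,0,0)}, is equal to the ideal generated by f₁ = x₂^{(q−1)b+1}x₃ − x₂x₃^q, f₂ = x₁^{(q−1)b+1}x₃ − x₁x₃^q, and f₃ = x₁^q x₂ − x₁x₂^q. -/

import Mathlib

/-!
The generators are weighted homogeneous and vanish on all of `𝔽_q³`, since `x ^ q = x` and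
`x ^ ((q - 1) * b + 1) = x` there. Conversely, rewriting with the generators (leading terms
`x₁x₃^q`, `x₂x₃^q`, `x₁^q x₂`) turns a weighted-homogeneous `f` vanishing off the origin into a
combination `G` of standard monomials of the same weighted degree that still vanishes off the
origin, and, all weights being positive, also at the origin. Replacing every positive exponent
by its representative in `{1, …, q - 1}` modulo `q - 1` does not change the function a monomial
defines on `𝔽_q³`, and it is injective on the standard monomials of a fixed weighted degree
(this is where `b > 0` enters). The result is a polynomial of degree `< q` in each variable
vanishing on `𝔽_q³`, hence zero, so `G = 0` and `f` lies in the ideal of the generators.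
-/

open MvPolynomial

def reduceExp (q n : ℕ) : ℕ := if n = 0 then 0 else (n - 1) % (q - 1) + 1

@[simp] theorem reduceExp_zero (q : ℕ) : reduceExp q 0 = 0 := if_pos rfl

theorem reduceExp_eq_zero_iff {q n : ℕ} : reduceExp q n = 0 ↔ n = 0 := by
  unfold reduceExp; split <;> omega

theorem reduceExp_of_lt {q n : ℕ} (h : n < q) : reduceExp q n = n := by
  unfold reduceExp
  split
  · omega
  · rw [Nat.mod_eq_of_lt (by omega)]; omega

theorem reduceExp_le {q : ℕ} (hq : 2 ≤ q) (n : ℕ) : reduceExp q n ≤ q - 1 := by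
  unfold reduceExp
  split
  · omega
  · have := Nat.mod_lt (n - 1) (show 0 < q - 1 by omega); omega

namespace FiniteField

variable {K : Type*} [Field K] [Fintype K]

theorem pow_reduceExp (x : K) (n : ℕ) : x ^ reduceExp (Fintype.card K) n = x ^ n := by
  unfold reduceExp
  split_ifs with hn
  · rw [hn]
  rcases eq_or_ne x 0 with rfl | hx
  · rw [zero_pow (by omega), zero_pow hn]
  · obtain ⟨m, rfl⟩ := Nat.exists_eq_succ_of_ne_zero hn
    nth_rewrite 2 [← Nat.div_add_mod m (Fintype.card K - 1)]
    rw [Nat.succ_sub_one, pow_succ, pow_succ, pow_add, pow_mul, pow_card_sub_one_eq_one x hx,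
      one_pow, one_mul]

theorem pow_card_sub_one_mul_add_one (x : K) (k : ℕ) : x ^ ((Fintype.card K - 1) * k + 1) = x := by
  rcases eq_or_ne x 0 with rfl | hx
  · exact zero_pow (Nat.succ_ne_zero _)
  · rw [pow_succ, pow_mul, pow_card_sub_one_eq_one x hx, one_pow, one_mul]

end FiniteField

namespace MvPolynomial

theorem exists_eq_of_mem_support_sum_monomial {σ R ι : Type*} [CommSemiring R] {s : Finset ι}
    {φ : ι → σ →₀ ℕ} {c : ι → R} {v : σ →₀ ℕ}
    (hv : v ∈ (∑ i ∈ s, monomial (φ i) (c i)).support) : ∃ i ∈ s, φ i = v := by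
  classical
  obtain ⟨i, hi, hvi⟩ := Finset.mem_biUnion.mp (support_sum hv)
  exact ⟨i, hi, (Finset.mem_singleton.mp (support_monomial_subset hvi)).symm⟩

universe u

variable {σ K : Type u} [Finite σ] [Field K] [Fintype K]

theorem eq_zero_of_eval_eq_zero_of_injOn {P : MvPolynomial σ K} (hP : ∀ y, eval y P = 0)
    (hinj : Set.InjOn (Finsupp.mapRange (reduceExp (Fintype.card K)) (reduceExp_zero _))
      (P.support : Set (σ →₀ ℕ))) : P = 0 := by
  classical
  set ρ := Finsupp.mapRange (α := σ) (reduceExp (Fintype.card K)) (reduceExp_zero _)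
  set H : MvPolynomial σ K := ∑ u ∈ P.support, monomial (ρ u) (coeff u P)
  have hH : ∀ y, eval y H = eval y P := by
    intro y
    conv_rhs => rw [as_sum P]
    simp only [H, ρ, map_sum, eval_monomial]
    refine Finset.sum_congr rfl fun u _ => ?_
    rw [Finsupp.prod_mapRange_index (fun _ => pow_zero _)]
    simp only [FiniteField.pow_reduceExp]
  have hH0 : H = 0 := by
    refine eq_zero_of_eval_eq_zero σ K H (fun y => (hH y).trans (hP y)) ?_
    rw [mem_restrictDegree]
    intro s hs i
    obtain ⟨u, -, rfl⟩ := exists_eq_of_mem_support_sum_monomial hs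
    exact reduceExp_le Fintype.one_lt_card _
  ext u
  by_contra hu
  have : coeff (ρ u) H = coeff u P := by
    simp only [H, coeff_sum, coeff_monomial]
    rw [Finset.sum_eq_single u
      (fun v hv hvu => if_neg fun h => hvu (hinj hv (mem_support_iff.mpr hu) h))
      (fun h => (h (mem_support_iff.mpr hu)).elim), if_pos rfl]
  rw [hH0, coeff_zero] at this
  exact hu this.symm

end MvPolynomial

theorem MvPolynomial.IsWeightedHomogeneous.eval_zero_eq_zero {σ R : Type*} [Nonempty σ]
    [CommRing R] [Nontrivial R] {w : σ → ℕ} (hw : ∀ i, w i ≠ 0) {P : MvPolynomial σ R} {d : ℕ}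
    (hP : IsWeightedHomogeneous w P d) (h : ∀ y ≠ 0, eval y P = 0) : eval 0 P = 0 := by
  rw [eval_zero, constantCoeff_eq]
  by_contra hc
  obtain rfl : d = 0 := by simpa only [map_zero] using (hP hc).symm
  have hPC : P = C (coeff 0 P) := by
    rw [← weightedHomogeneousComponent_zero P hw, weightedHomogeneousComponent_eq_self hP]
  have h1 := h 1 one_ne_zero
  rw [hPC, eval_C] at h1
  exact hc h1

namespace P11b

def generators (R : Type*) [CommRing R] (q b : ℕ) : Set (MvPolynomial (Fin 3) R) :=
  {X 1 ^ ((q - 1) * b + 1) * X 2 - X 1 * X 2 ^ q,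
    X 0 ^ ((q - 1) * b + 1) * X 2 - X 0 * X 2 ^ q,
    X 0 ^ q * X 1 - X 0 * X 1 ^ q}

/-- Exponents of the monomials divisible by none of the leading terms `X 0 * X 2 ^ q`,
`X 1 * X 2 ^ q`, `X 0 ^ q * X 1` of the generators. -/
def IsStandard (q : ℕ) (u : Fin 3 →₀ ℕ) : Prop :=
  (q ≤ u 2 → u 0 = 0 ∧ u 1 = 0) ∧ (q ≤ u 0 → u 1 = 0)

theorem weight_fin_three (b : ℕ) (u : Fin 3 →₀ ℕ) :
    Finsupp.weight ![1, 1, b] u = u 0 + u 1 + b * u 2 := by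
  simp [Finsupp.weight_apply, Finsupp.sum_fintype, Fin.sum_univ_three, mul_comm]

theorem monomial_fin_three {R : Type*} [CommSemiring R] (u : Fin 3 →₀ ℕ) (r : R) :
    monomial u r = C r * (X 0 ^ u 0 * X 1 ^ u 1 * X 2 ^ u 2) := by
  rw [monomial_eq, Finsupp.prod_fintype _ _ fun _ => pow_zero _, Fin.prod_univ_three]

variable {R : Type*} [CommRing R]

theorem isWeightedHomogeneous_of_mem_generators {q b : ℕ} (hq : 1 ≤ q)
    {g : MvPolynomial (Fin 3) R} (hg : g ∈ generators R q b) :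
    ∃ d, IsWeightedHomogeneous ![1, 1, b] g d := by
  have hX : ∀ i, IsWeightedHomogeneous ![1, 1, b] (X i : MvPolynomial (Fin 3) R) (![1, 1, b] i) :=
    isWeightedHomogeneous_X R _
  have hsub : ∀ {φ ψ : MvPolynomial (Fin 3) R} {m n : ℕ}, IsWeightedHomogeneous ![1, 1, b] φ m →
      IsWeightedHomogeneous ![1, 1, b] ψ n → m = n →
        ∃ d, IsWeightedHomogeneous ![1, 1, b] (φ - ψ) d :=
    fun hφ hψ h => ⟨_, hφ.sub (h ▸ hψ)⟩
  obtain ⟨p, rfl⟩ : ∃ p, q = p + 1 := ⟨q - 1, by omega⟩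
  rcases hg with rfl | rfl | rfl
  · exact hsub ((hX 1).pow _ |>.mul (hX 2)) ((hX 1).mul ((hX 2).pow _)) (by simp; ring)
  · exact hsub ((hX 0).pow _ |>.mul (hX 2)) ((hX 0).mul ((hX 2).pow _)) (by simp; ring)
  · exact hsub ((hX 0).pow _ |>.mul (hX 1)) ((hX 0).mul ((hX 1).pow _)) (by simp; ring)

theorem exists_isStandard_sub_mem {q : ℕ} (b : ℕ) (hq : 2 ≤ q) (a c e : ℕ) :
    ∃ v : Fin 3 →₀ ℕ, IsStandard q v ∧ v 0 + v 1 + b * v 2 = a + c + b * e ∧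
      (X 0 ^ a * X 1 ^ c * X 2 ^ e - X 0 ^ v 0 * X 1 ^ v 1 * X 2 ^ v 2 :
        MvPolynomial (Fin 3) R) ∈ Ideal.span (generators R q b) := by
  obtain ⟨p, rfl⟩ : ∃ p, q = p + 1 := ⟨q - 1, by omega⟩
  have hg₁ : X 1 ^ (p * b + 1) * X 2 - X 1 * X 2 ^ (p + 1) ∈ Ideal.span (generators R (p + 1) b) :=
    Ideal.subset_span (by simp [generators])
  have hg₂ : X 0 ^ (p * b + 1) * X 2 - X 0 * X 2 ^ (p + 1) ∈ Ideal.span (generators R (p + 1) b) :=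
    Ideal.subset_span (by simp [generators])
  have hg₃ : X 0 ^ (p + 1) * X 1 - X 0 * X 1 ^ (p + 1) ∈ Ideal.span (generators R (p + 1) b) :=
    Ideal.subset_span (by simp [generators])
  induction e using Nat.strong_induction_on generalizing a c with
  | _ e ihe =>
  induction a using Nat.strong_induction_on generalizing c with
  | _ a iha =>
  by_cases h₁ : p + 1 ≤ e ∧ 1 ≤ c
  · obtain ⟨⟨e, rfl⟩, ⟨c, rfl⟩⟩ : (∃ e', e = e' + (p + 1)) ∧ ∃ c', c = c' + 1 :=
      ⟨⟨e - (p + 1), by omega⟩, ⟨c - 1, by omega⟩⟩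
    obtain ⟨v, hv, hdeg, hmem⟩ := ihe (e + 1) (by omega) a (c + 1 + p * b)
    refine ⟨v, hv, by rw [hdeg]; ring, ?_⟩
    convert add_mem (Ideal.mul_mem_left _ (-(X 0 ^ a * X 1 ^ c * X 2 ^ e)) hg₁) hmem using 1
    ring
  by_cases h₂ : p + 1 ≤ e ∧ 1 ≤ a
  · obtain ⟨⟨e, rfl⟩, ⟨a, rfl⟩⟩ : (∃ e', e = e' + (p + 1)) ∧ ∃ a', a = a' + 1 :=
      ⟨⟨e - (p + 1), by omega⟩, ⟨a - 1, by omega⟩⟩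
    obtain ⟨v, hv, hdeg, hmem⟩ := ihe (e + 1) (by omega) (a + 1 + p * b) c
    refine ⟨v, hv, by rw [hdeg]; ring, ?_⟩
    convert add_mem (Ideal.mul_mem_left _ (-(X 0 ^ a * X 1 ^ c * X 2 ^ e)) hg₂) hmem using 1
    ring
  by_cases h₃ : p + 1 ≤ a ∧ 1 ≤ c
  · obtain ⟨⟨a, rfl⟩, ⟨c, rfl⟩⟩ : (∃ a', a = a' + (p + 1)) ∧ ∃ c', c = c' + 1 :=
      ⟨⟨a - (p + 1), by omega⟩, ⟨c - 1, by omega⟩⟩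
    obtain ⟨v, hv, hdeg, hmem⟩ := iha (a + 1) (by omega) (c + 1 + p)
    refine ⟨v, hv, by rw [hdeg]; ring, ?_⟩
    convert add_mem (Ideal.mul_mem_left _ (X 0 ^ a * X 1 ^ c * X 2 ^ e) hg₃) hmem using 1
    ring
  refine ⟨Finsupp.equivFunOnFinite.symm ![a, c, e], ?_, by simp, by simp⟩
  simp only [IsStandard, Finsupp.equivFunOnFinite_symm_apply_apply, Matrix.cons_val,
    Matrix.cons_val_zero, Matrix.cons_val_one]
  omega

theorem IsStandard.eq_of_mapRange_reduceExp_eq {q b : ℕ} (hb : 0 < b) {u v : Fin 3 →₀ ℕ}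
    (hu : IsStandard q u) (hv : IsStandard q v) (hdeg : u 0 + u 1 + b * u 2 = v 0 + v 1 + b * v 2)
    (h : u.mapRange (reduceExp q) (reduceExp_zero q) =
      v.mapRange (reduceExp q) (reduceExp_zero q)) :
    u = v := by
  have hr : ∀ i, reduceExp q (u i) = reduceExp q (v i) := fun i => by
    simpa using DFunLike.congr_fun h i
  have hzero : ∀ i, u i = 0 ↔ v i = 0 := fun i => by
    rw [← reduceExp_eq_zero_iff, hr i, reduceExp_eq_zero_iff]
  have h2 : u 2 = v 2 := by
    by_cases hpure : u 0 = 0 ∧ u 1 = 0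
    · have : v 0 = 0 ∧ v 1 = 0 := ⟨(hzero 0).1 hpure.1, (hzero 1).1 hpure.2⟩
      exact Nat.eq_of_mul_eq_mul_left hb (by omega)
    · have hu2 : u 2 < q := lt_of_not_ge fun h => hpure (hu.1 h)
      have hv2 : v 2 < q := lt_of_not_ge fun h => hpure (by simpa [hzero] using hv.1 h)
      simpa [reduceExp_of_lt hu2, reduceExp_of_lt hv2] using hr 2
  rw [h2] at hdeg
  have h1 : u 1 = v 1 := by
    by_cases hu1 : u 1 = 0
    · have := (hzero 1).1 hu1
      omega
    · have hu0 : u 0 < q := lt_of_not_ge fun h => hu1 (hu.2 h)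
      have hv0 : v 0 < q := lt_of_not_ge fun h => hu1 ((hzero 1).2 (hv.2 h))
      have := hr 0
      rw [reduceExp_of_lt hu0, reduceExp_of_lt hv0] at this
      omega
  have h0 : u 0 = v 0 := by omega
  ext i
  fin_cases i
  exacts [h0, h1, h2]

section FiniteFieldPoints

variable {F : Type} [Field F] [Fintype F]

theorem eq_zero_of_isStandard {q b d : ℕ} (hq : q = Fintype.card F) (hb : 0 < b)
    {G : MvPolynomial (Fin 3) F} (hG : IsWeightedHomogeneous ![1, 1, b] G d)
    (hstd : ∀ u ∈ G.support, IsStandard q u) (hvan : ∀ y ≠ 0, eval y G = 0) : G = 0 := by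
  subst hq
  refine eq_zero_of_eval_eq_zero_of_injOn (fun y => ?_) fun u hu v hv h => ?_
  · rcases eq_or_ne y 0 with rfl | hy
    · refine hG.eval_zero_eq_zero (fun i => ?_) hvan
      fin_cases i <;> simp [hb.ne']
    · exact hvan y hy
  · refine (hstd u hu).eq_of_mapRange_reduceExp_eq hb (hstd v hv) ?_ h
    rw [← weight_fin_three, ← weight_fin_three, hG (mem_support_iff.mp hu),
      hG (mem_support_iff.mp hv)]

theorem eval_eq_zero_of_mem_generators {q b : ℕ} (hq : q = Fintype.card F)
    {g : MvPolynomial (Fin 3) F} (hg : g ∈ generators F q b) (y : Fin 3 → F) : eval y g = 0 := by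
  subst hq
  rcases hg with rfl | rfl | rfl <;>
    simp [FiniteField.pow_card, FiniteField.pow_card_sub_one_mul_add_one]

theorem eval_eq_zero_of_mem_span_generators {q b : ℕ} (hq : q = Fintype.card F)
    {p : MvPolynomial (Fin 3) F} (hp : p ∈ Ideal.span (generators F q b)) (y : Fin 3 → F) :
    eval y p = 0 :=
  RingHom.mem_ker.mp <| Ideal.span_le.mpr (fun _ hg => eval_eq_zero_of_mem_generators hq hg y) hp

theorem mem_span_generators_of_isWeightedHomogeneous {q b d : ℕ} (hq : q = Fintype.card F)
    (hb : 0 < b) {f : MvPolynomial (Fin 3) F} (hf : IsWeightedHomogeneous ![1, 1, b] f d)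
    (hvan : ∀ y ≠ 0, eval y f = 0) : f ∈ Ideal.span (generators F q b) := by
  choose ν hstd hdeg hmem using exists_isStandard_sub_mem (R := F) b (hq ▸ Fintype.one_lt_card)
  set G := ∑ u ∈ f.support, monomial (ν (u 0) (u 1) (u 2)) (coeff u f)
  have hfG : f - G ∈ Ideal.span (generators F q b) := by
    nth_rewrite 1 [as_sum f]
    rw [← Finset.sum_sub_distrib]
    refine sum_mem fun u _ => ?_
    rw [monomial_fin_three, monomial_fin_three, ← mul_sub]
    exact Ideal.mul_mem_left _ _ (hmem _ _ _)
  have hG : G = 0 := by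
    refine eq_zero_of_isStandard hq hb (d := d) (fun {v} hv => ?_) (fun v hv => ?_) fun y hy => ?_
    · obtain ⟨u, hu, rfl⟩ := exists_eq_of_mem_support_sum_monomial (mem_support_iff.mpr hv)
      rw [weight_fin_three, hdeg, ← weight_fin_three]
      exact hf (mem_support_iff.mp hu)
    · obtain ⟨u, -, rfl⟩ := exists_eq_of_mem_support_sum_monomial hv
      exact hstd _ _ _
    · simpa [hvan y hy] using eval_eq_zero_of_mem_span_generators hq hfG y
  simpa [hG] using hfG

end FiniteFieldPoints

end P11b

theorem vanishing_ideal_P11b (F : Type) [Field F] [Fintype F] (q : ℕ)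
    (hq : q = Fintype.card F) (b : ℕ) (hb : 0 < b) :
    Ideal.span {f : MvPolynomial (Fin 3) F |
        (∃ d : ℕ, IsWeightedHomogeneous ![1, 1, b] f d) ∧
        ∀ y : Fin 3 → F, y ≠ 0 → eval y f = 0} =
    Ideal.span {X 1 ^ ((q - 1) * b + 1) * X 2 - X 1 * X 2 ^ q,
        X 0 ^ ((q - 1) * b + 1) * X 2 - X 0 * X 2 ^ q,
        X 0 ^ q * X 1 - X 0 * X 1 ^ q} := by
  refine le_antisymm (Ideal.span_le.mpr ?_) (Ideal.span_mono fun g hg => ⟨?_, fun y _ => ?_⟩)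
  · rintro f ⟨⟨d, hf⟩, hvan⟩
    exact P11b.mem_span_generators_of_isWeightedHomogeneous hq hb hf hvan
  · exact P11b.isWeightedHomogeneous_of_mem_generators (hq ▸ Fintype.card_pos) hg
  · exact P11b.eval_eq_zero_of_mem_generators hq hg y
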